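/- arXiv:1707.04215 — 2 statements merged into one kernel-verified Lean document; each statement's English description precedes it below -/
import Mathlib

section
/- For every continuous function f on the circle 𝕋, the Cesàro means of the partial sums of the Fourier series of f converge uniformly to f on 𝕋 (Fejér's theorem). -/
/-!
The Fejér mean `σ_N f` is the convolution of `f` with the Fejér kernel
`K_N = (N + 1)⁻¹ |∑_{k ≤ N} e_k|²`, which is nonnegative with integral `1`. Hence `‖σ_N f‖ ≤ ‖f‖`
for all `N`, so the operators `σ_N` are equicontinuous and the set of `f` with `σ_N f → f` is
closed. It contains every trigonometric polynomial, whose partial Fourier sums are eventually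
constant (so their Cesàro means converge too), and trigonometric polynomials are dense by
Stone–Weierstrass.
-/

open MeasureTheory AddCircle Filter

instance : Fact ((0:ℝ) < 1) := ⟨one_pos⟩

open Finset Topology ComplexConjugate

theorem Finset.sum_range_sum_Icc_eq_sum_range_sum_range_sub {M : Type*} [AddCommMonoid M] (N : ℕ)
    (g : ℤ → M) :
    ∑ n ∈ range N, ∑ m ∈ Icc (-(n : ℤ)) n, g m = ∑ j ∈ range N, ∑ k ∈ range N, g (j - k) := by
  rw [sum_sigma', ← sum_product']
  -- `(n, m) ↦ (j, k)` with `n = max j k` and `m = j - k`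
  refine sum_nbij' (fun p ↦ ((p.1 + min p.2 0 : ℤ).toNat, (p.1 - max p.2 0 : ℤ).toNat))
    (fun p ↦ ⟨max p.1 p.2, (p.1 : ℤ) - p.2⟩) ?_ ?_ ?_ ?_ ?_ <;> rintro ⟨a, b⟩ h <;>
    simp only [mem_sigma, mem_product, mem_range, mem_Icc] at h <;>
    simp only [mem_sigma, mem_product, mem_range, mem_Icc, Sigma.ext_iff, Prod.ext_iff,
      heq_eq_eq] <;>
    first | omega | (congr 1; omega)

namespace AddCircle

variable {T : ℝ}

theorem fourier_sub_apply (n : ℤ) (x y : AddCircle T) :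
    fourier n (x - y) = fourier n x * conj (fourier n y) := by
  rw [← fourier_neg, fourier_apply, fourier_apply, fourier_apply, smul_sub, sub_eq_add_neg,
    ← neg_smul, toCircle_add, Circle.coe_mul]

theorem sum_range_sum_Icc_fourier_eq_norm_sq (N : ℕ) (x : AddCircle T) :
    ∑ n ∈ range N, ∑ m ∈ Icc (-(n : ℤ)) n, fourier m x =
      ((‖∑ k ∈ range N, fourier (k : ℤ) x‖ ^ 2 : ℝ) : ℂ) := by
  push_cast
  rw [sum_range_sum_Icc_eq_sum_range_sum_range_sub, ← Complex.mul_conj', map_sum, sum_mul_sum]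
  simp_rw [← fourier_neg, ← fourier_add, sub_eq_add_neg]

noncomputable def fejerKernel (N : ℕ) (x : AddCircle T) : ℝ :=
  ((N : ℝ) + 1)⁻¹ * ‖∑ k ∈ range (N + 1), fourier (k : ℤ) x‖ ^ 2

theorem fejerKernel_nonneg (N : ℕ) (x : AddCircle T) : 0 ≤ fejerKernel N x := by
  unfold fejerKernel
  positivity

@[fun_prop]
theorem continuous_fejerKernel (N : ℕ) : Continuous (fejerKernel (T := T) N) := by
  unfold fejerKernel
  fun_prop

theorem ofReal_fejerKernel (N : ℕ) (x : AddCircle T) :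
    (fejerKernel N x : ℂ) =
      ((N : ℂ) + 1)⁻¹ * ∑ n ∈ range (N + 1), ∑ m ∈ Icc (-(n : ℤ)) n, fourier m x := by
  rw [fejerKernel, sum_range_sum_Icc_fourier_eq_norm_sq]
  push_cast
  rfl

variable [hT : Fact (0 < T)]

theorem _root_.Continuous.integrable_haarAddCircle {E : Type*} [NormedAddCommGroup E]
    {g : AddCircle T → E} (hg : Continuous g) : Integrable g haarAddCircle :=
  hg.integrable_of_hasCompactSupport (.of_compactSpace g)

theorem integral_fourier (n : ℤ) :
    ∫ x : AddCircle T, fourier n x ∂haarAddCircle = if n = 0 then 1 else 0 := by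
  split_ifs with hn
  · simp [hn]
  · exact integral_eq_zero_of_add_right_eq_neg (fourier_add_half_inv_index hn hT.out)

theorem integral_fejerKernel (N : ℕ) : ∫ x, fejerKernel (T := T) N x ∂haarAddCircle = 1 := by
  have hfourier (m : ℤ) : Integrable (fourier (T := T) m) haarAddCircle :=
    (fourier m).continuous.integrable_haarAddCircle
  apply Complex.ofReal_injective
  rw [← integral_complex_ofReal]
  simp_rw [ofReal_fejerKernel]
  rw [integral_const_mul,
    integral_finsetSum _ fun n _ ↦ integrable_finsetSum _ fun m _ ↦ hfourier m]
  simp_rw [integral_finsetSum _ fun m _ ↦ hfourier m, integral_fourier, sum_ite_eq', mem_Icc,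
    neg_nonpos, Nat.cast_nonneg, and_self, if_true, sum_const, card_range, nsmul_one]
  push_cast
  exact inv_mul_cancel₀ (Nat.cast_add_one_ne_zero N)

theorem norm_fourierCoeff_le (f : C(AddCircle T, ℂ)) (n : ℤ) : ‖fourierCoeff f n‖ ≤ ‖f‖ :=
  calc ‖fourierCoeff f n‖ ≤ ‖f‖ * haarAddCircle.real (Set.univ : Set (AddCircle T)) :=
        norm_integral_le_of_norm_le_const <| ae_of_all _ fun t ↦ by
          simpa [Circle.norm_coe] using f.norm_coe_le_norm t
    _ = ‖f‖ := by simp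

noncomputable def fourierCoeffCLM (n : ℤ) : C(AddCircle T, ℂ) →L[ℂ] ℂ :=
  LinearMap.mkContinuous
    { toFun f := fourierCoeff f n
      map_add' f g := by
        rw [ContinuousMap.coe_add, fourierCoeff.add f.continuous.integrable_haarAddCircle
          g.continuous.integrable_haarAddCircle, Pi.add_apply]
      map_smul' c f := fourierCoeff.const_smul f c n }
    1 fun f ↦ (one_mul ‖f‖).symm ▸ norm_fourierCoeff_le f n

noncomputable def fourierPartialSum (n : ℕ) : C(AddCircle T, ℂ) →L[ℂ] C(AddCircle T, ℂ) :=
  ∑ m ∈ Icc (-(n : ℤ)) n, (fourierCoeffCLM m).smulRight (fourier m)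

noncomputable def fejerMean (N : ℕ) : C(AddCircle T, ℂ) →L[ℂ] C(AddCircle T, ℂ) :=
  ((N : ℂ) + 1)⁻¹ • ∑ n ∈ range (N + 1), fourierPartialSum n

theorem fejerMean_apply (N : ℕ) (f : C(AddCircle T, ℂ)) :
    fejerMean N f = ((N : ℂ) + 1)⁻¹ •
      ∑ n ∈ range (N + 1), ∑ m ∈ Icc (-(n : ℤ)) n, fourierCoeff f m • fourier m := by
  simp [fejerMean, fourierPartialSum, fourierCoeffCLM]

theorem fourierCoeff_mul_fourier_eq_integral (f : C(AddCircle T, ℂ)) (m : ℤ) (x : AddCircle T) :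
    fourierCoeff f m * fourier m x = ∫ y, fourier m (x - y) * f y ∂haarAddCircle := by
  rw [fourierCoeff, ← integral_mul_const]
  congr 1 with y
  rw [fourier_sub_apply, fourier_neg, smul_eq_mul]
  ring

theorem fejerMean_apply_eq_integral (N : ℕ) (f : C(AddCircle T, ℂ)) (x : AddCircle T) :
    fejerMean N f x = ∫ y, (fejerKernel N (x - y) : ℂ) * f y ∂haarAddCircle := by
  have hintegrand (m : ℤ) : Integrable (fun y ↦ fourier m (x - y) * f y) haarAddCircle :=
    (by fun_prop : Continuous fun y ↦ fourier m (x - y) * f y).integrable_haarAddCircle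
  simp_rw [ofReal_fejerKernel, mul_assoc, integral_const_mul, sum_mul,
    integral_finsetSum _ fun n _ ↦ integrable_finsetSum _ fun m _ ↦ hintegrand m,
    integral_finsetSum _ fun m _ ↦ hintegrand m, ← fourierCoeff_mul_fourier_eq_integral,
    fejerMean_apply]
  simp

theorem norm_fejerMean_apply_le (N : ℕ) (f : C(AddCircle T, ℂ)) : ‖fejerMean N f‖ ≤ ‖f‖ := by
  refine (ContinuousMap.norm_le _ (norm_nonneg f)).2 fun x ↦ ?_
  have hK : Integrable (fun y ↦ fejerKernel N (x - y) * ‖f‖) haarAddCircle :=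
    (by fun_prop : Continuous fun y ↦ fejerKernel N (x - y) * ‖f‖).integrable_haarAddCircle
  calc ‖fejerMean N f x‖ ≤ ∫ y, fejerKernel N (x - y) * ‖f‖ ∂haarAddCircle := by
        rw [fejerMean_apply_eq_integral]
        refine norm_integral_le_of_norm_le hK (ae_of_all _ fun y ↦ ?_)
        rw [norm_mul, Complex.norm_real, Real.norm_of_nonneg (fejerKernel_nonneg N _)]
        gcongr
        · exact fejerKernel_nonneg N _
        · exact f.norm_coe_le_norm y
    _ = ‖f‖ := by
        rw [integral_mul_const, integral_sub_left_eq_self (fejerKernel N), integral_fejerKernel,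
          one_mul]

theorem equicontinuous_fejerMean :
    Equicontinuous fun N ↦ ⇑(fejerMean (T := T) N) := by
  have h := (NormedSpace.equicontinuous_TFAE (fejerMean (T := T))).out 3 1
  exact h.mp ⟨1, fun N f ↦ (one_mul ‖f‖).symm ▸ norm_fejerMean_apply_le N f⟩

theorem fourierPartialSum_fourier {n : ℕ} {i : ℤ} (hi : i.natAbs ≤ n) :
    fourierPartialSum n (fourier (T := T) i) = fourier i := by
  simp only [fourierPartialSum, _root_.sum_apply, ContinuousLinearMap.smulRight_apply]
  rw [sum_eq_single_of_mem i (by simp; omega) fun m _ hm ↦ ?_]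
  · simp [fourierCoeffCLM, fourierCoeff_fourier]
  · simp [fourierCoeffCLM, fourierCoeff_fourier, hm]

theorem tendsto_fourierPartialSum_of_mem_span {g : C(AddCircle T, ℂ)}
    (hg : g ∈ Submodule.span ℂ (Set.range fourier)) :
    Tendsto (fourierPartialSum · g) atTop (𝓝 g) := by
  induction hg using Submodule.span_induction with
  | mem _ h =>
    obtain ⟨i, rfl⟩ := h
    exact tendsto_const_nhds.congr' <| (eventually_ge_atTop i.natAbs).mono fun n hn ↦
      (fourierPartialSum_fourier hn).symm
  | zero => simp
  | add _ _ _ _ hx hy => simpa using hx.add hy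
  | smul c _ _ hx => simpa using hx.const_smul c

theorem tendsto_fejerMean_of_tendsto_fourierPartialSum {g : C(AddCircle T, ℂ)}
    (hg : Tendsto (fourierPartialSum · g) atTop (𝓝 g)) :
    Tendsto (fejerMean · g) atTop (𝓝 g) := by
  refine (hg.cesaro_smul.comp (tendsto_add_atTop_nat 1)).congr fun N ↦ ?_
  simp [fejerMean, RCLike.real_smul_eq_coe_smul (K := ℂ)]

theorem tendsto_fejerMean (f : C(AddCircle T, ℂ)) :
    Tendsto (fejerMean · f) atTop (𝓝 f) := by
  have hclosed : IsClosed {g : C(AddCircle T, ℂ) | Tendsto (fejerMean · g) atTop (𝓝 g)} :=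
    equicontinuous_fejerMean.isClosed_setOfPred_tendsto continuous_id
  have hspan : (Submodule.span ℂ (Set.range (fourier (T := T))) : Set C(AddCircle T, ℂ)) ⊆
      {g | Tendsto (fejerMean · g) atTop (𝓝 g)} := fun _ hg ↦
    tendsto_fejerMean_of_tendsto_fourierPartialSum (tendsto_fourierPartialSum_of_mem_span hg)
  have hclosure := hclosed.closure_subset_iff.2 hspan
  rw [← Submodule.topologicalClosure_coe, span_fourier_closure_eq_top] at hclosure
  exact hclosure (Set.mem_univ f)

end AddCircle

/-- Fejér's theorem: the Cesàro means of the partial sums of the Fourier series of a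
continuous function on the circle converge uniformly to the function. -/
theorem fejer (f : C(AddCircle (1:ℝ), ℂ)) :
    Tendsto
      (fun N : ℕ =>
        ‖((N:ℂ) + 1)⁻¹ •
            (∑ n ∈ Finset.range (N + 1),
              ∑ m ∈ Finset.Icc (-(n:ℤ)) (n:ℤ), fourierCoeff (⇑f) m • (fourier m : C(AddCircle (1:ℝ), ℂ)))
          - f‖)
      atTop (nhds 0) := by
  simpa only [fejerMean_apply] using tendsto_iff_norm_sub_tendsto_zero.mp (tendsto_fejerMean f)
end

section
/- Let A be a C*-algebra with strongly continuous 𝕋-action α and a ∈ A with homogeneous components a_n = ∫_𝕋 α_z(a) z^{-n} dz. If a_n = 0 for all n ∈ ℤ, then a = 0. -/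
open MeasureTheory AddCircle

/-- If all homogeneous components `aₙ = ∫_𝕋 α_z(a) z⁻ⁿ dz` of an element `a` of a C*-algebra
with strongly continuous circle action vanish, then `a = 0`. -/
theorem eq_zero_of_homogeneous_components_eq_zero
    {A : Type*} [CStarAlgebra A]
    (α : AddCircle (1:ℝ) → A ≃⋆ₐ[ℂ] A)
    (hadd : ∀ z w a, α (z + w) a = α z (α w a))
    (hzero : ∀ a : A, α 0 a = a)
    (hcont : ∀ a : A, Continuous fun z => α z a)
    (a : A)
    (h : ∀ n : ℤ, (∫ z : AddCircle (1:ℝ), (fourier (-n) z) • α z a ∂haarAddCircle) = 0) :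
    a = 0 := by
  apply (NormedSpace.eq_zero_iff_forall_dual_eq_zero ℂ a).mpr
  intro φ
  set g : C(AddCircle (1:ℝ), ℂ) := ⟨fun z => φ (α z a), φ.continuous.comp (hcont a)⟩ with hg
  have hcoeff : ∀ n : ℤ, fourierCoeff (⇑g) n = 0 := by
    intro n
    have hint : Integrable (fun z : AddCircle (1:ℝ) => (fourier (-n) z : ℂ) • α z a)
        haarAddCircle :=
      (Continuous.smul (map_continuous _) (hcont a)).integrable_of_hasCompactSupport
        (HasCompactSupport.of_compactSpace _)
    have heq : fourierCoeff (⇑g) n = φ (∫ z : AddCircle (1:ℝ),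
        (fourier (-n) z : ℂ) • α z a ∂haarAddCircle) := by
      rw [fourierCoeff, ← ContinuousLinearMap.integral_comp_comm φ hint]
      simp [g]
    rw [heq, h n, map_zero]
  set G : Lp ℂ 2 haarAddCircle := ContinuousMap.toLp (E := ℂ) 2 haarAddCircle ℂ g with hG
  have hG0 : G = 0 := by
    apply ((fourierBasis (T := 1)).repr.map_eq_zero_iff (x := G)).mp
    ext n
    rw [fourierBasis_repr, hG, fourierCoeff_toLp, hcoeff n]
    simp
  have hae : ⇑g =ᵐ[haarAddCircle] 0 := by
    have h1 : (G : AddCircle (1:ℝ) → ℂ) =ᵐ[haarAddCircle] ⇑g :=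
      ContinuousMap.coeFn_toLp haarAddCircle g
    have h2 : (G : AddCircle (1:ℝ) → ℂ) =ᵐ[haarAddCircle] 0 := by
      rw [hG0]; exact Lp.coeFn_zero _ _ _
    exact h1.symm.trans h2
  have hg0 : ⇑g = 0 :=
    (g.continuous.ae_eq_iff_eq (μ := haarAddCircle) continuous_const).mp hae
  have := congrFun hg0 0
  simpa [g, hzero a] using this
end
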